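/- arXiv:1302.0037 — 3 statements merged into one kernel-verified Lean document; each statement's English description precedes it below -/
import Mathlib

section
/- Let S(ρ) = ∑_{μ∈F} K_μ ρ K_μ^† be a trace-preserving Kraus-form map on complex square matrices of block form indexed by Fin n ⊕ Fin m (so ∑_μ K_μ^† K_μ = 1). Suppose (i) the range of S is supported on the A block, i.e. P_A · S(ρ) · P_A = S(ρ) for every matrix ρ, where P_A is the orthogonal projection onto the first (n-dimensional) block; and (ii) the A block is a decoherence-free subspace: there exists an n×n unitary U_A such that for every matrix ρ supported on the A block (P_A ρ P_A = ρ), S(ρ) equals the block embedding of U_A ρ_A U_A^†, where ρ_A is the upper-left n×n block of ρ. Then for every matrix ρ, S(ρ) = S(P_A ρ P_A + P_Ā ρ P_Ā), where P_Ā = 1 − P_A; that is, S destroys all coherence between the A and Ā blocks. -/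
open Matrix BigOperators

lemma aux_sum_mul_conjT_eq_zero {ι : Type*} [Fintype ι]
    {F : Type*} [Fintype F]
    (M : F → Matrix ι ι ℂ) (h : ∑ μ, M μ * (M μ)ᴴ = 0) (μ : F) : M μ = 0 := by
  ext a b
  have h2 : (∑ ν, M ν * (M ν)ᴴ) a a = 0 := by rw [h]; rfl
  rw [Matrix.sum_apply] at h2
  have h3 : ∑ ν, ∑ c, ((Complex.normSq (M ν a c) : ℝ) : ℂ) = 0 := by
    refine Eq.trans ?_ h2
    refine Finset.sum_congr rfl fun ν _ => ?_
    rw [Matrix.mul_apply]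
    refine Finset.sum_congr rfl fun c _ => ?_
    rw [Matrix.conjTranspose_apply]
    exact (Complex.mul_conj _).symm
  have h4 : ∑ ν, ∑ c, Complex.normSq (M ν a c) = 0 := by
    have := h3
    push_cast at this
    exact_mod_cast this
  have h5 : ∀ ν ∈ Finset.univ, (0:ℝ) ≤ ∑ c, Complex.normSq (M ν a c) :=
    fun ν _ => Finset.sum_nonneg fun c _ => Complex.normSq_nonneg _
  have h6 := (Finset.sum_eq_zero_iff_of_nonneg h5).mp h4 μ (Finset.mem_univ _)
  have h7 := (Finset.sum_eq_zero_iff_of_nonneg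
    (fun c _ => Complex.normSq_nonneg (M μ a c))).mp h6 b (Finset.mem_univ _)
  simpa using Complex.normSq_eq_zero.mp h7

lemma aux_mul_std_mul_conjT_apply {ι : Type*} [Fintype ι] [DecidableEq ι]
    (A B : Matrix ι ι ℂ) (x y a b : ι) :
    (A * Matrix.single x y (1:ℂ) * Bᴴ) a b = A a x * star (B b y) := by
  simp only [Matrix.mul_apply, Matrix.single, Matrix.conjTranspose_apply,
    Matrix.of_apply, ite_mul, mul_ite, zero_mul, mul_zero, ite_and]
  simp [Finset.sum_ite_eq, Finset.sum_ite_eq', ite_mul, zero_mul, mul_one]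

/-- The orthogonal projection onto the first (`A`) block. -/
noncomputable def projA (n m : ℕ) : Matrix (Fin n ⊕ Fin m) (Fin n ⊕ Fin m) ℂ :=
  Matrix.fromBlocks 1 0 0 0

set_option maxHeartbeats 800000 in
/-- a trace-preserving Kraus map whose range is supported on the
`A` block and for which the `A` block is a decoherence-free subspace destroys
all coherence between the `A` and `Ā` blocks. -/
theorem kraus_dfs_destroys_coherence {n m : ℕ} {F : Type*} [Fintype F]
    (K : F → Matrix (Fin n ⊕ Fin m) (Fin n ⊕ Fin m) ℂ)
    (S : Matrix (Fin n ⊕ Fin m) (Fin n ⊕ Fin m) ℂ →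
         Matrix (Fin n ⊕ Fin m) (Fin n ⊕ Fin m) ℂ)
    (hS : ∀ ρ, S ρ = ∑ μ, K μ * ρ * (K μ)ᴴ)
    (htp : ∑ μ, (K μ)ᴴ * K μ = 1)
    (hsupp : ∀ ρ, projA n m * S ρ * projA n m = S ρ)
    (UA : Matrix (Fin n) (Fin n) ℂ)
    (hUA : UA ∈ Matrix.unitaryGroup (Fin n) ℂ)
    (hdfs : ∀ ρ : Matrix (Fin n ⊕ Fin m) (Fin n ⊕ Fin m) ℂ,
      projA n m * ρ * projA n m = ρ →
      S ρ = Matrix.fromBlocks (UA * ρ.toBlocks₁₁ * UAᴴ) 0 0 0) :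
    ∀ ρ : Matrix (Fin n ⊕ Fin m) (Fin n ⊕ Fin m) ℂ,
      S ρ = S (projA n m * ρ * projA n m +
               (1 - projA n m) * ρ * (1 - projA n m)) := by
  set P : Matrix (Fin n ⊕ Fin m) (Fin n ⊕ Fin m) ℂ := projA n m with hPdef
  set Q : Matrix (Fin n ⊕ Fin m) (Fin n ⊕ Fin m) ℂ := 1 - P with hQdef
  -- basic facts about P and Q
  have hPd : P = Matrix.diagonal (Sum.elim (fun _ => (1:ℂ)) (fun _ => 0)) := by
    rw [hPdef]
    ext a b
    rcases a with a | a <;> rcases b with b | b <;>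
      simp [projA, Matrix.diagonal_apply, Matrix.one_apply]
  have hP2 : P * P = P := by
    rw [hPd, Matrix.diagonal_mul_diagonal]
    ext a b; rcases a with a | a <;> rcases b with b | b <;>
      simp [Matrix.diagonal_apply]
  have hPH : Pᴴ = P := by
    rw [hPd, Matrix.diagonal_conjTranspose]
    ext a b; rcases a with a | a <;> rcases b with b | b <;>
      simp [Matrix.diagonal_apply]
  have hPQ : P * Q = 0 := by rw [hQdef, mul_sub, mul_one, hP2, sub_self]
  have hQP : Q * P = 0 := by rw [hQdef, sub_mul, one_mul, hP2, sub_self]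
  have hQH : Qᴴ = Q := by rw [hQdef, Matrix.conjTranspose_sub, Matrix.conjTranspose_one, hPH]
  -- Step 1: P * K μ = K μ
  have hQK : ∀ μ, Q * K μ = 0 := by
    have hsum : ∑ μ, (Q * K μ) * (Q * K μ)ᴴ = 0 := by
      have e : ∀ μ, (Q * K μ) * (Q * K μ)ᴴ = Q * (K μ * 1 * (K μ)ᴴ) * Q := by
        intro μ
        rw [Matrix.conjTranspose_mul, hQH, mul_one]
        simp only [Matrix.mul_assoc]
      rw [Finset.sum_congr rfl fun μ _ => e μ]
      rw [← Finset.sum_mul, ← Finset.mul_sum, ← hS 1, ← hsupp 1]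
      rw [← Matrix.mul_assoc, ← Matrix.mul_assoc, hQP, Matrix.zero_mul,
        Matrix.zero_mul, Matrix.zero_mul]
    exact fun μ => aux_sum_mul_conjT_eq_zero _ hsum μ
  have hPK : ∀ μ, P * K μ = K μ := by
    intro μ
    have : (P + Q) * K μ = K μ := by rw [hQdef]; simp
    rw [add_mul, hQK μ, add_zero] at this
    exact this
  -- the full-space unitary W
  set W : Matrix (Fin n ⊕ Fin m) (Fin n ⊕ Fin m) ℂ :=
    Matrix.fromBlocks UA 0 0 1 with hWdef
  have hUA1 : UAᴴ * UA = 1 := by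
    have := hUA.1; rwa [Matrix.star_eq_conjTranspose] at this
  have hUA2 : UA * UAᴴ = 1 := by
    have := hUA.2; rwa [Matrix.star_eq_conjTranspose] at this
  have hWH : Wᴴ = Matrix.fromBlocks UAᴴ 0 0 1 := by
    rw [hWdef, Matrix.fromBlocks_conjTranspose]; simp
  have hW1 : W * Wᴴ = 1 := by
    rw [hWdef, hWH, Matrix.fromBlocks_multiply]
    simp [hUA2, Matrix.fromBlocks_one]
  have hW2 : Wᴴ * W = 1 := by
    rw [hWdef, hWH, Matrix.fromBlocks_multiply]
    simp [hUA1, Matrix.fromBlocks_one]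
  have hPW : P * Wᴴ = Wᴴ * P := by
    rw [hPdef, hWH, projA, Matrix.fromBlocks_multiply, Matrix.fromBlocks_multiply]
    simp
  -- block form of P * σ * P and the DFS property restated via W
  have hblock : ∀ σ : Matrix (Fin n ⊕ Fin m) (Fin n ⊕ Fin m) ℂ,
      P * σ * P = Matrix.fromBlocks σ.toBlocks₁₁ 0 0 0 := by
    intro σ
    conv_lhs => rw [← Matrix.fromBlocks_toBlocks σ]
    rw [hPdef, projA, Matrix.fromBlocks_multiply, Matrix.fromBlocks_multiply]
    simp
  have hPσP : ∀ σ : Matrix (Fin n ⊕ Fin m) (Fin n ⊕ Fin m) ℂ,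
      P * (P * σ * P) * P = P * σ * P := by
    intro σ
    calc P * (P * σ * P) * P = (P * P) * σ * (P * P) := by
          simp only [Matrix.mul_assoc]
      _ = P * σ * P := by rw [hP2]
  have hdfs' : ∀ σ : Matrix (Fin n ⊕ Fin m) (Fin n ⊕ Fin m) ℂ,
      S (P * σ * P) = W * (P * σ * P) * Wᴴ := by
    intro σ
    rw [hdfs (P * σ * P) (hPσP σ), hblock σ, hWdef, hWH]
    rw [Matrix.fromBlocks_multiply, Matrix.fromBlocks_multiply]
    simp [Matrix.toBlocks_fromBlocks₁₁, Matrix.mul_assoc]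
  -- the reduced Kraus operators
  set L : F → Matrix (Fin n ⊕ Fin m) (Fin n ⊕ Fin m) ℂ :=
    fun μ => Wᴴ * K μ * P with hLdef
  set N : F → Matrix (Fin n ⊕ Fin m) (Fin n ⊕ Fin m) ℂ :=
    fun μ => Wᴴ * K μ * Q with hNdef
  have hLH : ∀ μ, (L μ)ᴴ = P * (K μ)ᴴ * W := by
    intro μ
    rw [hLdef]
    simp [Matrix.conjTranspose_mul, hPH, Matrix.mul_assoc]
  have hLP : ∀ μ, L μ * P = L μ := by
    intro μ
    rw [hLdef]
    simp only [Matrix.mul_assoc, hP2]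
  have hPL : ∀ μ, P * L μ = L μ := by
    intro μ
    rw [hLdef]
    calc P * (Wᴴ * K μ * P) = (P * Wᴴ) * K μ * P := by simp only [Matrix.mul_assoc]
      _ = Wᴴ * (P * K μ) * P := by rw [hPW]; simp only [Matrix.mul_assoc]
      _ = Wᴴ * K μ * P := by rw [hPK]
  have hPN : ∀ μ, P * N μ = N μ := by
    intro μ
    rw [hNdef]
    calc P * (Wᴴ * K μ * Q) = (P * Wᴴ) * K μ * Q := by simp only [Matrix.mul_assoc]
      _ = Wᴴ * (P * K μ) * Q := by rw [hPW]; simp only [Matrix.mul_assoc]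
      _ = Wᴴ * K μ * Q := by rw [hPK]
  -- conjugation identity: ∑ L X Lᴴ = X for X supported on A
  have hsum_conj : ∀ X : Matrix (Fin n ⊕ Fin m) (Fin n ⊕ Fin m) ℂ,
      P * X * P = X → ∑ μ, L μ * X * (L μ)ᴴ = X := by
    intro X hX
    have hX' : P * (X * P) = X := by rw [← Matrix.mul_assoc]; exact hX
    have e : ∀ μ, L μ * X * (L μ)ᴴ = Wᴴ * (K μ * X * (K μ)ᴴ) * W := by
      intro μ
      rw [hLH μ, hLdef]
      simp only [Matrix.mul_assoc]
      congr 2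
      calc P * (X * (P * ((K μ)ᴴ * W))) = (P * (X * P)) * ((K μ)ᴴ * W) := by
            simp only [Matrix.mul_assoc]
        _ = X * ((K μ)ᴴ * W) := by rw [hX']
    rw [Finset.sum_congr rfl fun μ _ => e μ, ← Finset.sum_mul, ← Finset.mul_sum,
      ← hS X]
    conv_lhs => rw [← hX]
    rw [hdfs' X, hX]
    calc Wᴴ * (W * X * Wᴴ) * W = (Wᴴ * W) * X * (Wᴴ * W) := by
          simp only [Matrix.mul_assoc]
      _ = X := by rw [hW2, one_mul, mul_one]
  -- P E P = E for standard basis matrices supported on the A block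
  have hPEP : ∀ i j : Fin n,
      P * Matrix.single (Sum.inl i) (Sum.inl j) (1:ℂ) * P =
        Matrix.single (Sum.inl i) (Sum.inl j) (1:ℂ) := by
    intro i j
    rw [hPd]
    ext a b
    simp only [Matrix.mul_diagonal, Matrix.diagonal_mul, Matrix.single,
      Matrix.of_apply]
    rcases a with a | a <;> rcases b with b | b <;> simp
  -- key entry identity for L
  have key : ∀ (i j : Fin n) (a b : Fin n ⊕ Fin m),
      ∑ μ, L μ a (Sum.inl i) * star (L μ b (Sum.inl j)) =
        (if Sum.inl i = a then (1:ℂ) else 0) * (if Sum.inl j = b then 1 else 0) := by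
    intro i j a b
    have h1 := hsum_conj (Matrix.single (Sum.inl i) (Sum.inl j) (1:ℂ)) (hPEP i j)
    have h2 := congrFun (congrFun h1 a) b
    rw [Matrix.sum_apply] at h2
    rw [Finset.sum_congr rfl fun μ _ =>
      aux_mul_std_mul_conjT_apply (L μ) (L μ) (Sum.inl i) (Sum.inl j) a b] at h2
    rw [h2]
    by_cases h : (Sum.inl i : Fin n ⊕ Fin m) = a <;>
      by_cases h' : (Sum.inl j : Fin n ⊕ Fin m) = b <;>
      simp [Matrix.single, h, h']
  -- ∑ L Lᴴ = P
  have hsumLLH : ∑ μ, L μ * (L μ)ᴴ = P := by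
    have h1 := hsum_conj P (by rw [hP2, hP2])
    calc ∑ μ, L μ * (L μ)ᴴ = ∑ μ, L μ * P * (L μ)ᴴ := by
          refine Finset.sum_congr rfl fun μ _ => ?_
          rw [hLP μ]
      _ = P := h1
  -- the coefficients c μ
  set c : F → ℂ := fun μ => ∑ i, L μ (Sum.inl i) (Sum.inl i) with hcdef
  have hLcol : ∀ μ a j, L μ a (Sum.inr j) = 0 := by
    intro μ a j
    conv_lhs => rw [← hLP μ]
    rw [hPd, Matrix.mul_diagonal]
    simp
  have hcL : ∑ μ, star (c μ) • L μ = (n:ℂ) • P := by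
    ext a b
    rw [Matrix.sum_apply, Matrix.smul_apply]
    simp only [Matrix.smul_apply, smul_eq_mul]
    rcases b with j | j
    · have e1 : ∀ μ, star (c μ) * L μ a (Sum.inl j)
          = ∑ i, L μ a (Sum.inl j) * star (L μ (Sum.inl i) (Sum.inl i)) := by
        intro μ
        simp only [hcdef, star_sum, Finset.sum_mul]
        exact Finset.sum_congr rfl fun i _ => by ring
      rw [Finset.sum_congr rfl fun μ _ => e1 μ, Finset.sum_comm]
      have e2 : ∀ i : Fin n,
          ∑ μ, L μ a (Sum.inl j) * star (L μ (Sum.inl i) (Sum.inl i))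
            = (if (Sum.inl j : Fin n ⊕ Fin m) = a then (1:ℂ) else 0) := by
        intro i
        rw [key j i a (Sum.inl i)]
        simp
      rw [Finset.sum_congr rfl fun i _ => e2 i, Finset.sum_const, Finset.card_univ]
      rw [hPd, Matrix.diagonal_apply]
      by_cases h : a = Sum.inl j
      · subst h; simp
      · have h' : ¬ ((Sum.inl j : Fin n ⊕ Fin m) = a) := fun hh => h hh.symm
        simp [h, h']
    · rw [hPd, Matrix.diagonal_apply]
      have : ∀ μ, star (c μ) * L μ a (Sum.inr j) = 0 := by
        intro μ; rw [hLcol μ a j, mul_zero]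
      rw [Finset.sum_congr rfl fun μ _ => this μ, Finset.sum_const_zero]
      by_cases h : a = Sum.inr j
      · subst h; simp
      · simp [h]
  have hcLe : ∀ a b, ∑ μ, star (c μ) * L μ a b = (n:ℂ) * P a b := by
    intro a b
    have h := congrFun (congrFun hcL a) b
    rw [Matrix.sum_apply] at h
    simpa [Matrix.smul_apply, smul_eq_mul] using h
  have hcc : ∑ μ, c μ * star (c μ) = (n:ℂ) * n := by
    calc ∑ μ, c μ * star (c μ)
        = ∑ μ, ∑ j, star (c μ) * L μ (Sum.inl j) (Sum.inl j) := by
          refine Finset.sum_congr rfl fun μ _ => ?_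
          rw [mul_comm]
          conv_lhs => rw [hcdef]
          simp only
          rw [Finset.mul_sum]
      _ = ∑ j : Fin n, ∑ μ, star (c μ) * L μ (Sum.inl j) (Sum.inl j) := Finset.sum_comm
      _ = ∑ j : Fin n, (n:ℂ) * P (Sum.inl j) (Sum.inl j) := by
          exact Finset.sum_congr rfl fun j _ => hcLe _ _
      _ = (n:ℂ) * n := by
          rw [hPd]
          simp [Matrix.diagonal_apply, Finset.sum_const, Finset.card_univ, mul_comm]
  have hPLH : ∀ μ, P * (L μ)ᴴ = (L μ)ᴴ := by
    intro μ
    rw [← hPH, ← Matrix.conjTranspose_mul, hLP]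
  have hcLHsum : ∑ μ, c μ • (L μ)ᴴ = (n:ℂ) • P := by
    have h := congrArg Matrix.conjTranspose hcL
    simpa [Matrix.conjTranspose_sum, Matrix.conjTranspose_smul, hPH, star_star,
      star_natCast] using h
  -- scalar property of L
  have hscalar : ∀ μ, (n:ℂ) • L μ = c μ • P := by
    have hMM : ∑ μ, ((n:ℂ) • L μ - c μ • P) * ((n:ℂ) • L μ - c μ • P)ᴴ = 0 := by
      have e : ∀ μ, ((n:ℂ) • L μ - c μ • P) * ((n:ℂ) • L μ - c μ • P)ᴴ
          = ((n:ℂ)*(n:ℂ)) • (L μ * (L μ)ᴴ) - (n:ℂ) • (star (c μ) • L μ)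
            - (n:ℂ) • (c μ • (L μ)ᴴ) + (c μ * star (c μ)) • P := by
        intro μ
        have t1 : ((n:ℂ) • L μ) * ((n:ℂ) • (L μ)ᴴ)
            = ((n:ℂ)*(n:ℂ)) • (L μ * (L μ)ᴴ) := by
          rw [smul_mul_assoc, mul_smul_comm, smul_smul]
        have t2 : ((n:ℂ) • L μ) * (star (c μ) • P)
            = (n:ℂ) • (star (c μ) • L μ) := by
          rw [smul_mul_assoc, mul_smul_comm, hLP]
        have t3 : ((c μ) • P) * ((n:ℂ) • (L μ)ᴴ)
            = (n:ℂ) • (c μ • (L μ)ᴴ) := by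
          rw [smul_mul_assoc, mul_smul_comm, hPLH, smul_comm]
        have t4 : ((c μ) • P) * (star (c μ) • P)
            = (c μ * star (c μ)) • P := by
          rw [smul_mul_assoc, mul_smul_comm, hP2, smul_smul]
        rw [Matrix.conjTranspose_sub, Matrix.conjTranspose_smul,
          Matrix.conjTranspose_smul, hPH, star_natCast, sub_mul, mul_sub, mul_sub,
          t1, t2, t3, t4]
        abel
      rw [Finset.sum_congr rfl fun μ _ => e μ]
      rw [Finset.sum_add_distrib, Finset.sum_sub_distrib, Finset.sum_sub_distrib]
      rw [← Finset.smul_sum, ← Finset.smul_sum, ← Finset.smul_sum, ← Finset.sum_smul]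
      rw [hsumLLH, hcL, hcLHsum, hcc]
      rw [smul_smul]
      abel
    intro μ
    exact sub_eq_zero.mp (aux_sum_mul_conjT_eq_zero _ hMM μ)
  -- orthogonality between L and N
  have hLN : ∑ μ, (L μ)ᴴ * N μ = 0 := by
    have e : ∀ μ, (L μ)ᴴ * N μ = P * ((K μ)ᴴ * K μ) * Q := by
      intro μ
      rw [hLH μ, hNdef]
      simp only [Matrix.mul_assoc]
      rw [show W * (Wᴴ * (K μ * Q)) = (W * Wᴴ) * (K μ * Q) by
        simp only [Matrix.mul_assoc], hW1, one_mul]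
    rw [Finset.sum_congr rfl fun μ _ => e μ, ← Finset.sum_mul, ← Finset.mul_sum,
      htp, mul_one, hPQ]
  have hLNe : ∀ x y, ∑ μ, ∑ cc, star (L μ cc x) * N μ cc y = 0 := by
    intro x y
    have h := congrFun (congrFun hLN x) y
    rw [Matrix.sum_apply] at h
    simpa [Matrix.mul_apply, Matrix.conjTranspose_apply] using h
  -- main goal
  intro ρ
  rw [hS, hS]
  rcases Nat.eq_zero_or_pos n with hn0 | hnpos
  · -- degenerate case n = 0
    have hP0 : P = 0 := by
      rw [hPd]
      ext a b
      rcases a with a | a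
      · exact absurd a.isLt (by omega)
      rcases b with b | b
      · exact absurd b.isLt (by omega)
      · simp [Matrix.diagonal_apply]
    have hK0 : ∀ μ, K μ = 0 := fun μ => by rw [← hPK μ, hP0, zero_mul]
    simp [hK0]
  have hn : (n:ℂ) ≠ 0 := Nat.cast_ne_zero.mpr (Nat.pos_iff_ne_zero.mp hnpos)
  have hLe : ∀ μ a b, (n:ℂ) * L μ a b = c μ * P a b := by
    intro μ a b
    have h := congrFun (congrFun (hscalar μ) a) b
    simpa [Matrix.smul_apply, smul_eq_mul] using h
  have hNrow : ∀ μ j y, N μ (Sum.inr j) y = 0 := by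
    intro μ j y
    conv_lhs => rw [← hPN μ]
    rw [hPd, Matrix.diagonal_mul]
    simp
  have hcN : ∀ b y, ∑ μ, star (c μ) * N μ b y = 0 := by
    intro b y
    rcases b with i | j
    · have h2 : ∀ μ, ∑ cc, star ((n:ℂ) * L μ cc (Sum.inl i)) * N μ cc y
          = star (c μ) * N μ (Sum.inl i) y := by
        intro μ
        have e : ∀ cc, star ((n:ℂ) * L μ cc (Sum.inl i)) * N μ cc y
            = (if cc = Sum.inl i then star (c μ) * N μ cc y else 0) := by
          intro cc
          rw [hLe μ cc (Sum.inl i), hPd, Matrix.diagonal_apply]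
          by_cases h : cc = Sum.inl i
          · simp [h]
          · simp [h]
        rw [Finset.sum_congr rfl fun cc _ => e cc,
          Finset.sum_ite_eq' Finset.univ (Sum.inl i)
            (fun cc => star (c μ) * N μ cc y)]
        simp
      have h4 : ∑ μ, ∑ cc, star ((n:ℂ) * L μ cc (Sum.inl i)) * N μ cc y
          = (n:ℂ) * ∑ μ, ∑ cc, star (L μ cc (Sum.inl i)) * N μ cc y := by
        rw [Finset.mul_sum]
        refine Finset.sum_congr rfl fun μ _ => ?_
        rw [Finset.mul_sum]
        refine Finset.sum_congr rfl fun cc _ => ?_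
        rw [star_mul', star_natCast]
        ring
      rw [Finset.sum_congr rfl fun μ _ => h2 μ] at h4
      rw [hLNe (Sum.inl i) y, mul_zero] at h4
      exact h4
    · have : ∀ μ, star (c μ) * N μ (Sum.inr j) y = 0 := by
        intro μ; rw [hNrow μ j y, mul_zero]
      rw [Finset.sum_congr rfl fun μ _ => this μ, Finset.sum_const_zero]
  have hfinal : ∀ a x b y, ∑ μ, L μ a x * star (N μ b y) = 0 := by
    intro a x b y
    have h1 : (n:ℂ) * ∑ μ, L μ a x * star (N μ b y)
        = P a x * star (∑ μ, star (c μ) * N μ b y) := by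
      rw [star_sum, Finset.mul_sum, Finset.mul_sum]
      refine Finset.sum_congr rfl fun μ _ => ?_
      calc (n:ℂ) * (L μ a x * star (N μ b y))
          = ((n:ℂ) * L μ a x) * star (N μ b y) := by ring
        _ = (c μ * P a x) * star (N μ b y) := by rw [hLe]
        _ = P a x * star (star (c μ) * N μ b y) := by
            rw [star_mul', star_star]; ring
    rw [hcN b y, star_zero, mul_zero] at h1
    exact (mul_eq_zero.mp h1).resolve_left hn
  -- the two coherence terms vanish
  have claim1 : ∀ σ : Matrix (Fin n ⊕ Fin m) (Fin n ⊕ Fin m) ℂ,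
      ∑ μ, K μ * (P * σ * Q) * (K μ)ᴴ = 0 := by
    intro σ
    have hKP : ∀ μ, K μ * P = W * L μ := by
      intro μ
      rw [hLdef]
      calc K μ * P = (W * Wᴴ) * (K μ * P) := by rw [hW1, one_mul]
        _ = W * (Wᴴ * K μ * P) := by simp only [Matrix.mul_assoc]
    have hKQ : ∀ μ, K μ * Q = W * N μ := by
      intro μ
      rw [hNdef]
      calc K μ * Q = (W * Wᴴ) * (K μ * Q) := by rw [hW1, one_mul]
        _ = W * (Wᴴ * K μ * Q) := by simp only [Matrix.mul_assoc]
    have e : ∀ μ, K μ * (P * σ * Q) * (K μ)ᴴ = W * (L μ * σ * (N μ)ᴴ) * Wᴴ := by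
      intro μ
      have h2 : Q * (K μ)ᴴ = (N μ)ᴴ * Wᴴ := by
        rw [← hQH, ← Matrix.conjTranspose_mul, hKQ μ, Matrix.conjTranspose_mul]
      calc K μ * (P * σ * Q) * (K μ)ᴴ
          = (K μ * P) * σ * (Q * (K μ)ᴴ) := by simp only [Matrix.mul_assoc]
        _ = (W * L μ) * σ * ((N μ)ᴴ * Wᴴ) := by rw [hKP μ, h2]
        _ = W * (L μ * σ * (N μ)ᴴ) * Wᴴ := by simp only [Matrix.mul_assoc]
    rw [Finset.sum_congr rfl fun μ _ => e μ, ← Finset.sum_mul, ← Finset.mul_sum]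
    have hz : ∑ μ, L μ * σ * (N μ)ᴴ = 0 := by
      ext a b
      rw [Matrix.sum_apply, Matrix.zero_apply]
      have e2 : ∀ μ, (L μ * σ * (N μ)ᴴ) a b
          = ∑ y, ∑ x, L μ a x * σ x y * star (N μ b y) := by
        intro μ
        rw [Matrix.mul_apply]
        refine Finset.sum_congr rfl fun y _ => ?_
        rw [Matrix.conjTranspose_apply, Matrix.mul_apply, Finset.sum_mul]
      rw [Finset.sum_congr rfl fun μ _ => e2 μ, Finset.sum_comm]
      refine Finset.sum_eq_zero fun y _ => ?_
      rw [Finset.sum_comm]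
      refine Finset.sum_eq_zero fun x _ => ?_
      have e3 : ∀ μ, L μ a x * σ x y * star (N μ b y)
          = (L μ a x * star (N μ b y)) * σ x y := fun μ => by ring
      rw [Finset.sum_congr rfl fun μ _ => e3 μ, ← Finset.sum_mul,
        hfinal a x b y, zero_mul]
    rw [hz, mul_zero, zero_mul]
  have claim2 : ∑ μ, K μ * (Q * ρ * P) * (K μ)ᴴ = 0 := by
    calc ∑ μ, K μ * (Q * ρ * P) * (K μ)ᴴ
        = ∑ μ, (K μ * (P * ρᴴ * Q) * (K μ)ᴴ)ᴴ := by
          refine Finset.sum_congr rfl fun μ _ => ?_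
          simp only [Matrix.conjTranspose_mul, Matrix.conjTranspose_conjTranspose,
            hPH, hQH]
          simp only [Matrix.mul_assoc]
      _ = (∑ μ, K μ * (P * ρᴴ * Q) * (K μ)ᴴ)ᴴ := by rw [Matrix.conjTranspose_sum]
      _ = 0 := by rw [claim1 ρᴴ, Matrix.conjTranspose_zero]
  -- assemble
  have hsplit : ρ = (P * ρ * P + Q * ρ * Q) + P * ρ * Q + Q * ρ * P := by
    have hPQ1 : P + Q = 1 := by rw [hQdef]; abel
    calc ρ = (P + Q) * ρ * (P + Q) := by rw [hPQ1, one_mul, mul_one]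
      _ = (P * ρ * P + Q * ρ * Q) + P * ρ * Q + Q * ρ * P := by noncomm_ring
  have e : ∀ μ, K μ * ρ * (K μ)ᴴ
      = K μ * (P * ρ * P + Q * ρ * Q) * (K μ)ᴴ
        + K μ * (P * ρ * Q) * (K μ)ᴴ + K μ * (Q * ρ * P) * (K μ)ᴴ := by
    intro μ
    conv_lhs => rw [hsplit]
    noncomm_ring
  rw [Finset.sum_congr rfl fun μ _ => e μ, Finset.sum_add_distrib,
    Finset.sum_add_distrib, claim1 ρ, claim2, add_zero, add_zero]
end

section
/- Let S(ρ) = ∑_{μ∈F} K_μ ρ K_μ^† be a trace-preserving Kraus-form map on complex matrices indexed by Fin n ⊕ Fin m satisfying: (i) P_A S(ρ) P_A = S(ρ) for all ρ, and (ii) there is an n×n unitary U_A with S(ρ) equal to the block embedding of U_A ρ_A U_A^† whenever P_A ρ P_A = ρ. Let ψ be a unit vector with components ψ_A ∈ ℂ^n and ψ_Ā ∈ ℂ^m. If S applied to the block embedding of ψ_Ā ψ_Ā^† is a nonnegative real scalar multiple of the block embedding of (U_A ψ_A)(U_A ψ_A)^†, then S(ψ ψ^†) is a pure state, i.e. S(ψ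 ψ^†) = v v^† where v is the block embedding of the unit vector U_A ψ_A / ‖ψ_A‖ (assuming ψ_A ≠ 0; if ψ_A = 0 the conclusion is that S(ψψ^†) is the scalar multiple itself, which is pure of the stated form for some unit vector). -/
/-!
Split `ψ = (ψ_A, 0) + (0, ψ_Ā)`. Both pieces are sent to multiples of the pure state `u uᴴ`,
`u = (U_A ψ_A, 0)`. A sum of rank-one positive matrices `∑ (K_μ x)(K_μ x)ᴴ` can only be a multiple
of `u uᴴ` if every `K_μ x` is a multiple of `u`, and this property is additive in `x`; hence
`S(ψψᴴ) = β u uᴴ`, and trace preservation forces `β ‖ψ_A‖² = 1`.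
-/

open Matrix BigOperators

open scoped ComplexOrder

theorem vecMulVec_smul_star {R ι : Type*} [CommSemiring R] [StarRing R] (c : R) (x : ι → R) :
    vecMulVec (c • x) (star (c • x)) = (c * star c) • vecMulVec x (star x) := by
  rw [star_smul, smul_vecMulVec, vecMulVec_smul, smul_smul, mul_comm]

theorem star_mulVec_dotProduct_mulVec_of_mem_unitaryGroup {𝕜 ι : Type*} [RCLike 𝕜] [Fintype ι]
    [DecidableEq ι] {U : Matrix ι ι 𝕜} (hU : U ∈ unitaryGroup ι 𝕜) (x : ι → 𝕜) :
    star (U *ᵥ x) ⬝ᵥ U *ᵥ x = star x ⬝ᵥ x := by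
  rw [star_mulVec, ← dotProduct_mulVec, mulVec_mulVec, ← star_eq_conjTranspose,
    mem_unitaryGroup_iff'.mp hU, one_mulVec]

theorem Complex.inv_ofReal_sqrt_re_mul_star {z : ℂ} (hz : 0 ≤ z) :
    ((√z.re : ℝ) : ℂ)⁻¹ * star ((√z.re : ℝ) : ℂ)⁻¹ = z⁻¹ := by
  obtain ⟨hre, him⟩ := Complex.nonneg_iff.mp hz
  rw [star_inv₀, Complex.star_def, Complex.conj_ofReal, ← mul_inv, ← Complex.ofReal_mul,
    Real.mul_self_sqrt hre, Complex.conj_eq_iff_re.mp (Complex.conj_eq_iff_im.mpr him.symm)]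

theorem star_inv_sqrt_smul_dotProduct_inv_sqrt_smul {ι : Type*} [Fintype ι] {u : ι → ℂ}
    (hu : star u ⬝ᵥ u ≠ 0) :
    star ((√(star u ⬝ᵥ u).re : ℂ)⁻¹ • u) ⬝ᵥ (√(star u ⬝ᵥ u).re : ℂ)⁻¹ • u = 1 := by
  rw [star_smul, smul_dotProduct, dotProduct_smul, smul_smul, smul_eq_mul, mul_comm (star _),
    Complex.inv_ofReal_sqrt_re_mul_star (dotProduct_star_self_nonneg u), inv_mul_cancel₀ hu]

section RankOne

variable {𝕜 ι : Type*} [RCLike 𝕜] [Fintype ι]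

theorem mem_span_singleton_of_forall_dotProduct_eq_zero {x u : ι → 𝕜}
    (h : ∀ z, star u ⬝ᵥ z = 0 → star x ⬝ᵥ z = 0) : x ∈ 𝕜 ∙ u := by
  have hx : WithLp.toLp 2 x ∈ 𝕜 ∙ (WithLp.toLp 2 u : EuclideanSpace 𝕜 ι) := by
    rw [← Submodule.orthogonal_orthogonal (𝕜 ∙ _), Submodule.mem_orthogonal]
    intro z hz
    rw [Submodule.mem_orthogonal_singleton_iff_inner_right,
      EuclideanSpace.inner_eq_star_dotProduct, dotProduct_comm, WithLp.ofLp_toLp] at hz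
    rw [EuclideanSpace.inner_eq_star_dotProduct, dotProduct_comm, star_dotProduct, WithLp.ofLp_toLp,
      h _ hz, star_zero]
  obtain ⟨c, hc⟩ := Submodule.mem_span_singleton.mp hx
  exact Submodule.mem_span_singleton.mpr ⟨c, congrArg WithLp.ofLp hc⟩

theorem exists_sum_vecMulVec_star_eq_smul_iff {F : Type*} [Fintype F] (y : F → ι → 𝕜)
    (u : ι → 𝕜) :
    (∃ c : 𝕜, ∑ μ, vecMulVec (y μ) (star (y μ)) = c • vecMulVec u (star u)) ↔
      ∀ μ, y μ ∈ 𝕜 ∙ u := by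
  constructor
  · rintro ⟨c, hc⟩ μ
    -- positive summands cannot cancel, so a vector orthogonal to `u` is orthogonal to each `y μ`
    refine mem_span_singleton_of_forall_dotProduct_eq_zero fun z hz => ?_
    have hquad := congrArg (fun M => star z ⬝ᵥ M *ᵥ z) hc
    simp only [sum_mulVec, smul_mulVec, vecMulVec_mulVec, hz, op_smul_eq_smul,
      dotProduct_sum, dotProduct_smul, smul_eq_mul, zero_mul, mul_zero] at hquad
    simp only [star_dotProduct z] at hquad
    have hzero : (fun ν => star (y ν) ⬝ᵥ z) = 0 := dotProduct_self_star_eq_zero.mp hquad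
    exact congrFun hzero μ
  · intro h
    choose e he using fun μ => Submodule.mem_span_singleton.mp (h μ)
    refine ⟨∑ μ, star (e μ) * e μ, ?_⟩
    simp only [← he, Finset.sum_smul, star_smul, smul_vecMulVec, vecMulVec_smul, smul_smul]

end RankOne

section Kraus

variable {F ι κ : Type*} [Fintype F] [Fintype ι]

def krausMap {R : Type*} [Semiring R] [StarRing R] (K : F → Matrix κ ι R) (ρ : Matrix ι ι R) :
    Matrix κ κ R :=
  ∑ μ, K μ * ρ * (K μ)ᴴ

theorem trace_krausMap {R : Type*} [CommSemiring R] [StarRing R] [Fintype κ]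
    [DecidableEq ι] (K : F → Matrix κ ι R) (hK : ∑ μ, (K μ)ᴴ * K μ = 1) (ρ : Matrix ι ι R) :
    trace (krausMap K ρ) = trace ρ := by
  simp_rw [krausMap, trace_sum, trace_mul_cycle _ ρ, ← trace_sum, ← Finset.sum_mul, hK, one_mul]

theorem mul_vecMulVec_star_mul_conjTranspose {R : Type*} [Semiring R] [StarRing R]
    (K : Matrix κ ι R) (x : ι → R) :
    K * vecMulVec x (star x) * Kᴴ = vecMulVec (K *ᵥ x) (star (K *ᵥ x)) := by
  rw [mul_vecMulVec, vecMulVec_mul, star_mulVec]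

theorem exists_krausMap_add_eq_smul {𝕜 : Type*} [RCLike 𝕜] [Fintype κ] (K : F → Matrix κ ι 𝕜)
    {v w : ι → 𝕜} {u : κ → 𝕜}
    (hv : ∃ c : 𝕜, krausMap K (vecMulVec v (star v)) = c • vecMulVec u (star u))
    (hw : ∃ c : 𝕜, krausMap K (vecMulVec w (star w)) = c • vecMulVec u (star u)) :
    ∃ c : 𝕜, krausMap K (vecMulVec (v + w) (star (v + w))) = c • vecMulVec u (star u) := by
  simp only [krausMap, mul_vecMulVec_star_mul_conjTranspose,
    exists_sum_vecMulVec_star_eq_smul_iff] at hv hw ⊢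
  exact fun μ => mulVec_add (K μ) v w ▸ add_mem (hv μ) (hw μ)

theorem krausMap_vecMulVec_eq_of_eq_smul [Fintype κ] [DecidableEq ι] (K : F → Matrix κ ι ℂ)
    (hK : ∑ μ, (K μ)ᴴ * K μ = 1) {x : ι → ℂ} (hx : star x ⬝ᵥ x = 1) {u : κ → ℂ} {β : ℂ}
    (h : krausMap K (vecMulVec x (star x)) = β • vecMulVec u (star u)) :
    star u ⬝ᵥ u ≠ 0 ∧ krausMap K (vecMulVec x (star x)) =
      vecMulVec ((√(star u ⬝ᵥ u).re : ℂ)⁻¹ • u) (star ((√(star u ⬝ᵥ u).re : ℂ)⁻¹ • u)) := by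
  have hβ : β * (star u ⬝ᵥ u) = 1 := by
    have htr := trace_krausMap K hK (vecMulVec x (star x))
    rwa [h, trace_smul, trace_vecMulVec, trace_vecMulVec, dotProduct_comm u, dotProduct_comm x,
      hx, smul_eq_mul] at htr
  refine ⟨right_ne_zero_of_mul_eq_one hβ, ?_⟩
  rw [vecMulVec_smul_star, Complex.inv_ofReal_sqrt_re_mul_star (dotProduct_star_self_nonneg u), h,
    eq_inv_of_mul_eq_one_left hβ]

end Kraus

section BlockEmbedding

variable {R m n : Type*} [Semiring R] [StarRing R]

theorem vecMulVec_sumElim_zero_star (x : m → R) :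
    vecMulVec (Sum.elim x (0 : n → R)) (star (Sum.elim x (0 : n → R))) =
      fromBlocks (vecMulVec x (star x)) 0 0 0 := by
  ext (i | i) (j | j) <;> simp [vecMulVec_apply]

theorem vecMulVec_zero_sumElim_star (x : n → R) :
    vecMulVec (Sum.elim (0 : m → R) x) (star (Sum.elim (0 : m → R) x)) =
      fromBlocks 0 0 0 (vecMulVec x (star x)) := by
  ext (i | i) (j | j) <;> simp [vecMulVec_apply]

theorem projA_mul_fromBlocks_mul_projA {n m : ℕ} (X : Matrix (Fin n) (Fin n) ℂ) :
    projA n m * fromBlocks X 0 0 0 * projA n m = fromBlocks X 0 0 0 := by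
  simp [projA, fromBlocks_multiply]

end BlockEmbedding

theorem proportional_implies_pure_output_general {n m : ℕ} {F : Type*} [Fintype F]
    (K : F → Matrix (Fin n ⊕ Fin m) (Fin n ⊕ Fin m) ℂ)
    (S : Matrix (Fin n ⊕ Fin m) (Fin n ⊕ Fin m) ℂ →
         Matrix (Fin n ⊕ Fin m) (Fin n ⊕ Fin m) ℂ)
    (hS : ∀ ρ, S ρ = ∑ μ, K μ * ρ * (K μ)ᴴ)
    (htp : ∑ μ, (K μ)ᴴ * K μ = 1)
    (UA : Matrix (Fin n) (Fin n) ℂ)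
    (hUA : UA ∈ Matrix.unitaryGroup (Fin n) ℂ)
    (hdfs : ∀ ρ : Matrix (Fin n ⊕ Fin m) (Fin n ⊕ Fin m) ℂ,
      projA n m * ρ * projA n m = ρ →
      S ρ = Matrix.fromBlocks (UA * ρ.toBlocks₁₁ * UAᴴ) 0 0 0)
    (ψ : Fin n ⊕ Fin m → ℂ)
    (hψ : star ψ ⬝ᵥ ψ = 1)
    (a : ℝ)
    (hprop : S (Matrix.fromBlocks 0 0 0
          (Matrix.vecMulVec (ψ ∘ Sum.inr) (star (ψ ∘ Sum.inr)))) =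
      (a : ℂ) • Matrix.fromBlocks
          (Matrix.vecMulVec (UA *ᵥ (ψ ∘ Sum.inl)) (star (UA *ᵥ (ψ ∘ Sum.inl))))
          0 0 0) :
    (ψ ∘ Sum.inl ≠ 0 →
      S (Matrix.vecMulVec ψ (star ψ)) =
        Matrix.vecMulVec
          (Sum.elim (((Real.sqrt ((star (ψ ∘ Sum.inl) ⬝ᵥ (ψ ∘ Sum.inl)).re) : ℂ)⁻¹ •
              (UA *ᵥ (ψ ∘ Sum.inl))) : Fin n → ℂ) (0 : Fin m → ℂ))
          (star (Sum.elim (((Real.sqrt ((star (ψ ∘ Sum.inl) ⬝ᵥ (ψ ∘ Sum.inl)).re) : ℂ)⁻¹ •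
              (UA *ᵥ (ψ ∘ Sum.inl))) : Fin n → ℂ) (0 : Fin m → ℂ)))) ∧
    (ψ ∘ Sum.inl = 0 →
      S (Matrix.vecMulVec ψ (star ψ)) =
        (a : ℂ) • Matrix.fromBlocks
          (Matrix.vecMulVec (UA *ᵥ (ψ ∘ Sum.inl)) (star (UA *ᵥ (ψ ∘ Sum.inl))))
          0 0 0) ∧
    (∃ v : Fin n ⊕ Fin m → ℂ, star v ⬝ᵥ v = 1 ∧
      S (Matrix.vecMulVec ψ (star ψ)) = Matrix.vecMulVec v (star v)) := by
  obtain rfl : S = krausMap K := funext hS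
  set φ := ψ ∘ Sum.inl
  set u : Fin n ⊕ Fin m → ℂ := Sum.elim (UA *ᵥ φ) 0
  have hA : krausMap K (vecMulVec (Sum.elim φ (0 : Fin m → ℂ)) (star (Sum.elim φ 0))) =
      (1 : ℂ) • vecMulVec u (star u) := by
    rw [one_smul, vecMulVec_sumElim_zero_star, vecMulVec_sumElim_zero_star,
      hdfs _ (projA_mul_fromBlocks_mul_projA _), toBlocks_fromBlocks₁₁,
      mul_vecMulVec_star_mul_conjTranspose]
  have hĀ : krausMap K (vecMulVec (Sum.elim (0 : Fin n → ℂ) (ψ ∘ Sum.inr))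
      (star (Sum.elim 0 (ψ ∘ Sum.inr)))) = (a : ℂ) • vecMulVec u (star u) := by
    rwa [vecMulVec_zero_sumElim_star, vecMulVec_sumElim_zero_star]
  obtain ⟨β, hβ⟩ : ∃ β : ℂ, krausMap K (vecMulVec ψ (star ψ)) = β • vecMulVec u (star u) := by
    have hsplit : Sum.elim φ (0 : Fin m → ℂ) + Sum.elim (0 : Fin n → ℂ) (ψ ∘ Sum.inr) = ψ := by
      ext (i | i) <;> simp [φ]
    exact hsplit ▸ exists_krausMap_add_eq_smul K ⟨1, hA⟩ ⟨a, hĀ⟩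
  obtain ⟨hu0, hout⟩ := krausMap_vecMulVec_eq_of_eq_smul K htp hψ hβ
  have hnorm : star u ⬝ᵥ u = star φ ⬝ᵥ φ := by
    rw [Function.star_sumElim, sumElim_dotProduct_sumElim, dotProduct_zero, add_zero,
      star_mulVec_dotProduct_mulVec_of_mem_unitaryGroup hUA]
  have hcu : Sum.elim ((√(star u ⬝ᵥ u).re : ℂ)⁻¹ • (UA *ᵥ φ)) (0 : Fin m → ℂ) =
      (√(star u ⬝ᵥ u).re : ℂ)⁻¹ • u := by
    ext (i | i) <;> simp [u]
  rw [← hnorm, hcu]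
  refine ⟨fun _ => hout, fun hφ => absurd (by simp [hnorm, hφ]) hu0, _, ?_, hout⟩
  exact star_inv_sqrt_smul_dotProduct_inv_sqrt_smul hu0

/-- conversely, if the channel output on the `Ā`-block embedding
of `ψ_Ā ψ_Āᴴ` is a nonnegative scalar multiple of the `A`-block embedding of
`(U_A ψ_A)(U_A ψ_A)ᴴ`, then `S(ψψᴴ)` is pure: when `ψ_A ≠ 0` it equals `v vᴴ`
with `v` the block embedding of `U_A ψ_A / ‖ψ_A‖`, and when `ψ_A = 0` it
equals the scalar multiple itself. -/
theorem proportional_implies_pure_output {n m : ℕ} {F : Type*} [Fintype F]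
    (K : F → Matrix (Fin n ⊕ Fin m) (Fin n ⊕ Fin m) ℂ)
    (S : Matrix (Fin n ⊕ Fin m) (Fin n ⊕ Fin m) ℂ →
         Matrix (Fin n ⊕ Fin m) (Fin n ⊕ Fin m) ℂ)
    (hS : ∀ ρ, S ρ = ∑ μ, K μ * ρ * (K μ)ᴴ)
    (htp : ∑ μ, (K μ)ᴴ * K μ = 1)
    (hsupp : ∀ ρ, projA n m * S ρ * projA n m = S ρ)
    (UA : Matrix (Fin n) (Fin n) ℂ)
    (hUA : UA ∈ Matrix.unitaryGroup (Fin n) ℂ)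
    (hdfs : ∀ ρ : Matrix (Fin n ⊕ Fin m) (Fin n ⊕ Fin m) ℂ,
      projA n m * ρ * projA n m = ρ →
      S ρ = Matrix.fromBlocks (UA * ρ.toBlocks₁₁ * UAᴴ) 0 0 0)
    (ψ : Fin n ⊕ Fin m → ℂ)
    (hψ : star ψ ⬝ᵥ ψ = 1)
    (a : ℝ) (ha : 0 ≤ a)
    (hprop : S (Matrix.fromBlocks 0 0 0
          (Matrix.vecMulVec (ψ ∘ Sum.inr) (star (ψ ∘ Sum.inr)))) =
      (a : ℂ) • Matrix.fromBlocks
          (Matrix.vecMulVec (UA *ᵥ (ψ ∘ Sum.inl)) (star (UA *ᵥ (ψ ∘ Sum.inl))))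
          0 0 0) :
    (ψ ∘ Sum.inl ≠ 0 →
      S (Matrix.vecMulVec ψ (star ψ)) =
        Matrix.vecMulVec
          (Sum.elim (((Real.sqrt ((star (ψ ∘ Sum.inl) ⬝ᵥ (ψ ∘ Sum.inl)).re) : ℂ)⁻¹ •
              (UA *ᵥ (ψ ∘ Sum.inl))) : Fin n → ℂ) (0 : Fin m → ℂ))
          (star (Sum.elim (((Real.sqrt ((star (ψ ∘ Sum.inl) ⬝ᵥ (ψ ∘ Sum.inl)).re) : ℂ)⁻¹ •
              (UA *ᵥ (ψ ∘ Sum.inl))) : Fin n → ℂ) (0 : Fin m → ℂ)))) ∧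
    (ψ ∘ Sum.inl = 0 →
      S (Matrix.vecMulVec ψ (star ψ)) =
        (a : ℂ) • Matrix.fromBlocks
          (Matrix.vecMulVec (UA *ᵥ (ψ ∘ Sum.inl)) (star (UA *ᵥ (ψ ∘ Sum.inl))))
          0 0 0) ∧
    (∃ v : Fin n ⊕ Fin m → ℂ, star v ⬝ᵥ v = 1 ∧
      S (Matrix.vecMulVec ψ (star ψ)) = Matrix.vecMulVec v (star v)) :=
  proportional_implies_pure_output_general K S hS htp UA hUA hdfs ψ hψ a hprop
end

section
/- Let S(ρ) = ∑_{μ∈F} K_μ ρ K_μ^† be a trace-preserving Kraus-form map on complex matrices indexed by Fin n ⊕ Fin m satisfying: (i) P_A S(ρ) P_A = S(ρ) for all ρ, and (ii) there is an n×n unitary U_A with S(ρ) equal to the block embedding of U_A ρ_A U_A^† whenever P_A ρ P_A = ρ. Write each K_μ in block form as [[A_μ, B_μ],[0,0]] (which hypothesis (i) forces). Then for every matrix ρ with blocks ρ_A (upper-left n×n) and ρ_Ā (lower-right m×m), S(ρ) equals the block embedding of U_A ρ_A U_A^† + ∑_μ B_μ ρ_Ā B_μ^†. In particular S is realized by the one-step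 measurement-based feedback protocol: project onto the A or Ā block, apply U_A on outcome A, and apply the map with Kraus operators (B_μ) on outcome Ā. -/
open Matrix BigOperators

/-!
Condition (i) at `ρ = 1` says `∑ K_μ K_μᴴ` has no `Ā`-diagonal block, which kills the lower
rows of every Kraus operator: `K_μ = [[A_μ, B_μ], [0, 0]]`. On states supported in the `A` block
the channel is `σ ↦ ∑ A_μ σ A_μᴴ = U σ Uᴴ`, so the `Uᴴ A_μ` are Kraus operators of the identity
channel, hence scalars: `A_μ = c_μ U`. The off-diagonal block of trace preservation,
`∑ A_μᴴ B_μ = 0`, then reads `∑ conj c_μ • B_μ = 0`, which kills the cross terms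
`∑ A_μ X B_μᴴ = U X (∑ conj c_μ • B_μ)ᴴ` of `∑ K_μ ρ K_μᴴ`; what remains is
`U ρ_A Uᴴ + ∑ B_μ ρ_Ā B_μᴴ`.
-/

open scoped ComplexOrder

namespace Matrix

section Blocks

variable {l m n o α : Type*}

theorem sum_fromBlocks {F : Type*} [Fintype F] [AddCommMonoid α]
    (A : F → Matrix n l α) (B : F → Matrix n m α) (C : F → Matrix o l α)
    (D : F → Matrix o m α) :
    ∑ μ, fromBlocks (A μ) (B μ) (C μ) (D μ)
      = fromBlocks (∑ μ, A μ) (∑ μ, B μ) (∑ μ, C μ) (∑ μ, D μ) := by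
  ext (i | i) (j | j) <;> simp [sum_apply]

variable [CommRing α] [StarRing α]

theorem fromBlocks_mul_mul_conjTranspose_fromBlocks [Fintype l] [Fintype n] [Fintype m]
    (A : Matrix l n α) (B : Matrix l m α) (ρ : Matrix (n ⊕ m) (n ⊕ m) α) :
    fromBlocks A B (0 : Matrix o n α) 0 * ρ * (fromBlocks A B (0 : Matrix o n α) 0)ᴴ
      = fromBlocks (A * ρ.toBlocks₁₁ * Aᴴ + A * ρ.toBlocks₁₂ * Bᴴ
          + B * ρ.toBlocks₂₁ * Aᴴ + B * ρ.toBlocks₂₂ * Bᴴ) 0 0 0 := by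
  conv_lhs => rw [← fromBlocks_toBlocks ρ]
  rw [fromBlocks_conjTranspose, fromBlocks_multiply, fromBlocks_multiply]
  simp only [Matrix.add_mul, Matrix.mul_assoc, Matrix.zero_mul, Matrix.mul_zero, add_zero,
    conjTranspose_zero]
  congr 1
  abel

theorem conjTranspose_fromBlocks_mul_fromBlocks [Fintype l] [Fintype o]
    (A : Matrix l n α) (B : Matrix l m α) :
    (fromBlocks A B (0 : Matrix o n α) 0)ᴴ * fromBlocks A B (0 : Matrix o n α) 0
      = fromBlocks (Aᴴ * A) (Aᴴ * B) (Bᴴ * A) (Bᴴ * B) := by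
  rw [fromBlocks_conjTranspose, fromBlocks_multiply]
  simp

end Blocks

section Kraus

variable {F ι κ R : Type*} [Fintype F] [CommRing R] [StarRing R]

section Positivity

variable [PartialOrder R] [StarOrderedRing R] [NoZeroDivisors R]

theorem apply_eq_zero_of_sum_mul_conjTranspose_apply_eq_zero [Fintype κ] (K : F → Matrix ι κ R)
    {i : ι} (h : (∑ μ, K μ * (K μ)ᴴ) i i = 0) (μ : F) (j : κ) : K μ i j = 0 := by
  let v : F × κ → R := fun p => K p.1 i p.2
  have hv : v ⬝ᵥ star v = 0 := by
    simpa [dotProduct, Fintype.sum_prod_type, sum_apply, mul_apply] using h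
  exact congrFun (dotProduct_self_star_eq_zero.1 hv) (μ, j)

theorem eq_fromBlocks_zero_zero_of_toBlocks₂₂_sum_mul_conjTranspose_eq_zero {l n m o : Type*}
    [Fintype n] [Fintype m] (K : F → Matrix (l ⊕ o) (n ⊕ m) R)
    (h : (∑ μ, K μ * (K μ)ᴴ).toBlocks₂₂ = 0) (μ : F) :
    K μ = fromBlocks (K μ).toBlocks₁₁ (K μ).toBlocks₁₂ 0 0 := by
  have hrow : ∀ i j, K μ (Sum.inr i) j = 0 := fun i =>
    apply_eq_zero_of_sum_mul_conjTranspose_apply_eq_zero K (congrFun₂ h i i) μ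
  ext (i | i) (j | j) <;> simp [toBlocks₁₁, toBlocks₁₂, hrow]

theorem exists_eq_smul_one_of_forall_sum_mul_mul_conjTranspose_eq_self [Fintype ι]
    [DecidableEq ι] (M : F → Matrix ι ι R)
    (h : ∀ σ, ∑ μ, M μ * σ * (M μ)ᴴ = σ) : ∃ c : F → R, ∀ μ, M μ = c μ • (1 : Matrix ι ι R) := by
  have entry : ∀ i j k l, (fun μ => M μ k i) ⬝ᵥ star (fun μ => M μ l j) = single i j 1 k l := by
    intro i j k l
    conv_rhs => rw [← h (single i j 1)]
    simp [dotProduct, sum_apply, mul_apply, single, ite_and]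
  have off_diag : ∀ μ k i, k ≠ i → M μ k i = 0 := fun μ k i hki =>
    congrFun (by simpa [single, hki.symm] using entry i i k k : (fun μ => M μ k i) = 0) μ
  -- `d i := (M μ i i)_μ` has `d i ⬝ᵥ star (d j) = 1` for all `i, j`, so
  -- `(d i - d j) ⬝ᵥ star (d i - d j) = 1 - 1 - 1 + 1 = 0`.
  have diag : ∀ i j, (fun μ => M μ i i) = fun μ => M μ j j := by
    intro i j
    rw [← sub_eq_zero, ← dotProduct_self_star_eq_zero, star_sub, sub_dotProduct, dotProduct_sub,
      dotProduct_sub, entry, entry, entry, entry]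
    simp
  rcases isEmpty_or_nonempty ι with hι | ⟨⟨i₀⟩⟩
  · exact ⟨0, fun μ => Subsingleton.elim _ _⟩
  refine ⟨fun μ => M μ i₀ i₀, fun μ => ?_⟩
  ext k i
  by_cases hki : k = i
  · subst hki
    simpa using congrFun (diag k i₀) μ
  · simp [off_diag μ k i hki, hki]

theorem exists_eq_smul_of_forall_sum_mul_mul_conjTranspose_eq [Fintype ι] [DecidableEq ι]
    {U : Matrix ι ι R} (hU : U ∈ unitaryGroup ι R) (A : F → Matrix ι ι R)
    (h : ∀ σ, ∑ μ, A μ * σ * (A μ)ᴴ = U * σ * Uᴴ) : ∃ c : F → R, ∀ μ, A μ = c μ • U := by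
  have hU₁ : Uᴴ * U = 1 := mem_unitaryGroup_iff'.1 hU
  have hU₂ : U * Uᴴ = 1 := mem_unitaryGroup_iff.1 hU
  obtain ⟨c, hc⟩ := exists_eq_smul_one_of_forall_sum_mul_mul_conjTranspose_eq_self
    (fun μ => Uᴴ * A μ) fun σ => by
      calc ∑ μ, Uᴴ * A μ * σ * (Uᴴ * A μ)ᴴ = Uᴴ * (∑ μ, A μ * σ * (A μ)ᴴ) * U := by
            simp only [conjTranspose_mul, conjTranspose_conjTranspose, Matrix.mul_sum,
              Matrix.sum_mul, Matrix.mul_assoc]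
        _ = σ := by rw [h, Matrix.mul_assoc, Matrix.mul_assoc, hU₁, ← Matrix.mul_assoc,
              ← Matrix.mul_assoc, hU₁, Matrix.one_mul, Matrix.mul_one]
  refine ⟨c, fun μ => ?_⟩
  calc A μ = U * (Uᴴ * A μ) := by
        rw [← Matrix.mul_assoc, hU₂, Matrix.one_mul]
    _ = c μ • U := by rw [hc μ, Matrix.mul_smul, Matrix.mul_one]

end Positivity

theorem sum_mul_mul_conjTranspose_eq_zero_of_eq_smul [Fintype ι] [DecidableEq ι] [Fintype κ]
    {U : Matrix ι ι R} (hU : U * Uᴴ = 1) {A : F → Matrix ι ι R} {c : F → R}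
    (hA : ∀ μ, A μ = c μ • U) {B : F → Matrix ι κ R} (hAB : ∑ μ, (A μ)ᴴ * B μ = 0)
    (X : Matrix ι κ R) : ∑ μ, A μ * X * (B μ)ᴴ = 0 := by
  have hcB : ∑ μ, star (c μ) • B μ = 0 :=
    calc ∑ μ, star (c μ) • B μ = U * (Uᴴ * ∑ μ, star (c μ) • B μ) := by
          rw [← Matrix.mul_assoc, hU, Matrix.one_mul]
      _ = U * ∑ μ, (A μ)ᴴ * B μ := by
          simp [hA, Matrix.mul_sum, Matrix.mul_smul]
      _ = 0 := by rw [hAB, Matrix.mul_zero]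
  calc ∑ μ, A μ * X * (B μ)ᴴ = U * X * (∑ μ, star (c μ) • B μ)ᴴ := by
        simp [hA, conjTranspose_sum, Matrix.mul_sum, Matrix.mul_smul]
    _ = 0 := by rw [hcB, conjTranspose_zero, Matrix.mul_zero]

end Kraus

end Matrix

theorem projA_mul_mul_projA {n m : ℕ} (X : Matrix (Fin n ⊕ Fin m) (Fin n ⊕ Fin m) ℂ) :
    projA n m * X * projA n m = fromBlocks X.toBlocks₁₁ 0 0 0 := by
  rw [projA, ← fromBlocks_toBlocks X]
  simp [fromBlocks_multiply]

/-- the channel acts as the one-step measurement-based feedback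
protocol: `S(ρ)` is the block embedding of
`U_A ρ_A U_Aᴴ + ∑_μ B_μ ρ_Ā B_μᴴ` where `B_μ` is the upper-right block of
`K_μ`. -/
theorem dfs_channel_is_measurement_feedback {n m : ℕ} {F : Type*} [Fintype F]
    (K : F → Matrix (Fin n ⊕ Fin m) (Fin n ⊕ Fin m) ℂ)
    (S : Matrix (Fin n ⊕ Fin m) (Fin n ⊕ Fin m) ℂ →
         Matrix (Fin n ⊕ Fin m) (Fin n ⊕ Fin m) ℂ)
    (hS : ∀ ρ, S ρ = ∑ μ, K μ * ρ * (K μ)ᴴ)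
    (htp : ∑ μ, (K μ)ᴴ * K μ = 1)
    (hsupp : ∀ ρ, projA n m * S ρ * projA n m = S ρ)
    (UA : Matrix (Fin n) (Fin n) ℂ)
    (hUA : UA ∈ Matrix.unitaryGroup (Fin n) ℂ)
    (hdfs : ∀ ρ : Matrix (Fin n ⊕ Fin m) (Fin n ⊕ Fin m) ℂ,
      projA n m * ρ * projA n m = ρ →
      S ρ = Matrix.fromBlocks (UA * ρ.toBlocks₁₁ * UAᴴ) 0 0 0) :
    ∀ ρ : Matrix (Fin n ⊕ Fin m) (Fin n ⊕ Fin m) ℂ,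
      S ρ = Matrix.fromBlocks
        (UA * ρ.toBlocks₁₁ * UAᴴ +
          ∑ μ, (K μ).toBlocks₁₂ * ρ.toBlocks₂₂ * ((K μ).toBlocks₁₂)ᴴ)
        0 0 0 := by
  obtain ⟨A, B, hK⟩ : ∃ (A : F → Matrix (Fin n) (Fin n) ℂ) (B : F → Matrix (Fin n) (Fin m) ℂ),
      ∀ μ, K μ = fromBlocks (A μ) (B μ) 0 0 :=
    ⟨fun μ => (K μ).toBlocks₁₁, fun μ => (K μ).toBlocks₁₂,
      eq_fromBlocks_zero_zero_of_toBlocks₂₂_sum_mul_conjTranspose_eq_zero K <| by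
        simpa [projA_mul_mul_projA, hS] using (congrArg toBlocks₂₂ (hsupp 1)).symm⟩
  have hchannel : ∀ ρ, S ρ = fromBlocks (∑ μ, (A μ * ρ.toBlocks₁₁ * (A μ)ᴴ
      + A μ * ρ.toBlocks₁₂ * (B μ)ᴴ + B μ * ρ.toBlocks₂₁ * (A μ)ᴴ
      + B μ * ρ.toBlocks₂₂ * (B μ)ᴴ)) 0 0 0 := fun ρ => by
    simp only [hS, hK, fromBlocks_mul_mul_conjTranspose_fromBlocks, sum_fromBlocks,
      Finset.sum_const_zero]
  have hA : ∀ σ, ∑ μ, A μ * σ * (A μ)ᴴ = UA * σ * UAᴴ := fun σ => by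
    have hσ := hdfs (fromBlocks σ 0 0 0) (by rw [projA_mul_mul_projA, toBlocks_fromBlocks₁₁])
    rw [hchannel] at hσ
    simpa using congrArg toBlocks₁₁ hσ
  obtain ⟨c, hc⟩ := exists_eq_smul_of_forall_sum_mul_mul_conjTranspose_eq hUA A hA
  have hAB : ∑ μ, (A μ)ᴴ * B μ = 0 := by
    simpa [hK, conjTranspose_fromBlocks_mul_fromBlocks, sum_fromBlocks, ← fromBlocks_one]
      using congrArg toBlocks₁₂ htp
  have hcross := sum_mul_mul_conjTranspose_eq_zero_of_eq_smul (mem_unitaryGroup_iff.1 hUA) hc hAB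
  have hcross' : ∀ Y : Matrix (Fin m) (Fin n) ℂ, ∑ μ, B μ * Y * (A μ)ᴴ = 0 := fun Y => by
    simpa [conjTranspose_sum, Matrix.mul_assoc] using congrArg conjTranspose (hcross Yᴴ)
  intro ρ
  rw [hchannel, Finset.sum_add_distrib, Finset.sum_add_distrib, Finset.sum_add_distrib, hA,
    hcross, hcross']
  simp [hK]
end
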